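/- arXiv:2209.05678 — 8 statements merged into one kernel-verified Lean document; each statement's English description precedes it below -/
import Mathlib

section
/- Let A ∈ ℝ^{n×n} be symmetric positive semidefinite, V ∈ ℝ^{k×n}, W := V·A, and B ∈ ℝ^{k×k} symmetric. Then the block matrix M = [[A, Wᵀ],[W, B]] is positive semidefinite if and only if B − V·A·Vᵀ is positive semidefinite. -/
/-!
Writing the off-diagonal block as `A X`, the block matrix is the congruence
`Uᴴ [[A, 0], [0, D - Xᴴ A X]] U` with the invertible `U = [[1, X], [0, 1]]`, and a
block-diagonal matrix is positive semidefinite iff both of its diagonal blocks are.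
-/

open Matrix

namespace Matrix

variable {m n R : Type*} [Fintype m] [Fintype n] [Ring R]

theorem posSemidef_fromBlocks_zero_zero_iff [StarRing R] [PartialOrder R] [StarOrderedRing R]
    {A : Matrix m m R} {D : Matrix n n R} :
    (fromBlocks A 0 0 D).PosSemidef ↔ A.PosSemidef ∧ D.PosSemidef := by
  refine ⟨fun h => ⟨h.submatrix Sum.inl, h.submatrix Sum.inr⟩,
    fun ⟨hA, hD⟩ => .of_dotProduct_mulVec_nonneg ?_ fun x => ?_⟩
  · exact hA.isHermitian.fromBlocks (by simp) hD.isHermitian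
  · obtain ⟨u, v, rfl⟩ : ∃ u v, x = Sum.elim u v :=
      ⟨_, _, (Sum.elim_comp_inl_inr x).symm⟩
    simpa [fromBlocks_mulVec, Function.star_sumElim, sumElim_dotProduct_sumElim] using
      add_nonneg (hA.dotProduct_mulVec_nonneg u) (hD.dotProduct_mulVec_nonneg v)

theorem isUnit_fromBlocks_one_zero_one [DecidableEq m] [DecidableEq n] (X : Matrix m n R) :
    IsUnit (fromBlocks 1 X 0 1 : Matrix (m ⊕ n) (m ⊕ n) R) :=
  ⟨⟨fromBlocks 1 X 0 1, fromBlocks 1 (-X) 0 1, by simp [fromBlocks_multiply],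
    by simp [fromBlocks_multiply]⟩, rfl⟩

theorem fromBlocks_mul_eq_star_mul_mul [DecidableEq m] [DecidableEq n] [StarRing R]
    (A : Matrix m m R) (X : Matrix m n R) (D : Matrix n n R) :
    fromBlocks A (A * X) (Xᴴ * A) D =
      star (fromBlocks 1 X 0 1) * fromBlocks A 0 0 (D - Xᴴ * A * X) * fromBlocks 1 X 0 1 := by
  simp [star_eq_conjTranspose, fromBlocks_conjTranspose, fromBlocks_multiply, Matrix.mul_assoc]

theorem posSemidef_fromBlocks_mul_iff [DecidableEq m] [DecidableEq n] [StarRing R]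
    [PartialOrder R] [StarOrderedRing R] {A : Matrix m m R} (hA : A.PosSemidef)
    (X : Matrix m n R) (D : Matrix n n R) :
    (fromBlocks A (A * X) (Xᴴ * A) D).PosSemidef ↔ (D - Xᴴ * A * X).PosSemidef := by
  rw [fromBlocks_mul_eq_star_mul_mul,
    (isUnit_fromBlocks_one_zero_one X).posSemidef_star_left_conjugate_iff,
    posSemidef_fromBlocks_zero_zero_iff, and_iff_right hA]

end Matrix

theorem stmt1_general (n k : ℕ) (A : Matrix (Fin n) (Fin n) ℝ) (hA : A.PosSemidef)
    (V : Matrix (Fin k) (Fin n) ℝ) (B : Matrix (Fin k) (Fin k) ℝ) :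
    (Matrix.fromBlocks A (V * A)ᵀ (V * A) B).PosSemidef ↔ (B - V * A * Vᵀ).PosSemidef := by
  have hAt : Aᵀ = A := hA.isHermitian.eq
  simpa [conjTranspose_eq_transpose_of_trivial, transpose_mul, hAt] using
    posSemidef_fromBlocks_mul_iff hA Vᵀ B

/-- For `A ⪰ 0`, `W = V·A` and symmetric `B`, the block matrix
`[[A, Wᵀ],[W, B]]` is positive semidefinite iff `B − V·A·Vᵀ ⪰ 0`. -/
theorem stmt1 (n k : ℕ) (A : Matrix (Fin n) (Fin n) ℝ) (hA : A.PosSemidef)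
    (V : Matrix (Fin k) (Fin n) ℝ) (B : Matrix (Fin k) (Fin k) ℝ) (hB : B.IsSymm) :
    (Matrix.fromBlocks A (V * A)ᵀ (V * A) B).PosSemidef ↔ (B - V * A * Vᵀ).PosSemidef :=
  stmt1_general n k A hA V B
end

section
/- Let n ≥ 2 be an integer, let A ∈ ℝ^{n×n} be symmetric with all diagonal entries zero, and let r ∈ {1,…,n−1}. Then a vector d ∈ ℝⁿ satisfies A + Diag(d) ⪰ 0 and rank(A + Diag(d)) = r if and only if there exist a subset J ⊆ {1,…,n} with |J| = r and a positive definite symmetric matrix V ∈ ℝ^{J×J} such that, writing J̄ := {1,…,n}∖J and A(J,i) ∈ ℝ^J for the subvector of the i-th column of A indexed by J: (1) A(J,i)ᵀ V A(J,j) = A_{ij} for all i, j ∈ J̄ with i ≠ j; (2) A(J,i)ᵀ V A(J,i) = d_i for all i ∈ J̄; (3) (V⁻¹)_{ij} = A_{ij} for all i, j ∈ J with i ≠ j; (4) (V⁻¹)_{ii} = d_i for all i ∈ J. -/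
/-!
Choose `J` so that the columns of `M` indexed by `J` form a basis of its column space. For
positive semidefinite `M`, `x⋆ M x = 0` forces `M x = 0`, so `M[J,J]` is positive definite, and
writing every column in that basis gives `M = M[:,J] M[J,J]⁻¹ M[J,:]`. Conversely, for Hermitian
`M` such a factorization with `M[J,J]` positive definite is a congruence of `M[J,J]⁻¹`, hence
positive semidefinite, and its rank is `|J|`: it factors through `J` and contains the invertible
block `M[J,J]`. For `M = A + Diag(d)` with `A` hollow, `V = M[J,J]⁻¹` turns these conditions into
the system of the theorem.
-/

open Matrix

namespace Matrix

open scoped ComplexOrder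

variable {ι : Type*}

theorem exists_linearIndependent_cols_eq_mul {K m : Type*} [Field K] [Fintype ι]
    (M : Matrix m ι K) :
    ∃ J : Finset ι, LinearIndependent K (M.submatrix id (↑) : Matrix m J K).col ∧
      ∃ Y : Matrix J ι K, M = (M.submatrix id (↑) : Matrix m J K) * Y := by
  obtain ⟨b, -, -, hspan, hli⟩ :=
    exists_linearIndepOn_extension (linearIndepOn_empty K M.col) (Set.empty_subset Set.univ)
  set J := (Set.toFinite b).toFinset
  have hJ : (J : Set ι) = b := Set.Finite.coe_toFinset _
  refine ⟨J, by rw [← hJ] at hli; exact hli, ?_⟩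
  have hmem : ∀ j, M.col j ∈ Submodule.span K (Set.range fun k : J => M.col k) := by
    intro j
    have hrange : Set.range (fun k : J => M.col k) = M.col '' b := by
      rw [← hJ]; ext; simp
    rw [hrange]
    exact hspan ⟨j, Set.mem_univ j, rfl⟩
  choose c hc using fun j => (Submodule.mem_span_range_iff_exists_fun K).1 (hmem j)
  refine ⟨Matrix.of fun k j => c j k, ?_⟩
  ext i j
  rw [← col_apply M j i, ← hc j, mul_apply]
  simp [mul_comm]

theorem PosSemidef.posDef_conjTranspose_mul_mul {𝕜 m : Type*} [RCLike 𝕜] [Fintype ι]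
    [Fintype m] {M : Matrix ι ι 𝕜} (hM : M.PosSemidef) {B : Matrix ι m 𝕜}
    (hB : Function.Injective (M * B).mulVec) : (Bᴴ * M * B).PosDef := by
  refine .of_dotProduct_mulVec_pos (isHermitian_conjTranspose_mul_mul B hM.1) fun x hx => ?_
  have hquad : star x ⬝ᵥ (Bᴴ * M * B) *ᵥ x = star (B *ᵥ x) ⬝ᵥ M *ᵥ (B *ᵥ x) := by
    simp only [star_mulVec, dotProduct_mulVec, vecMul_vecMul]
  rw [hquad]
  refine (hM.dotProduct_mulVec_nonneg _).lt_of_ne fun h0 => hx (hB ?_)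
  rw [← mulVec_mulVec, (hM.dotProduct_mulVec_zero_iff _).1 h0.symm, mulVec_zero]

variable [DecidableEq ι]

section Skeleton

variable {R : Type*} [CommRing R] {M : Matrix ι ι R} {J : Finset ι}

/-- The skeleton (CUR) approximation `M[:,J] M[J,J]⁻¹ M[J,:]`; when `M[J,J]` is invertible,
`M = M.skeleton J` says that the Schur complement of `M[J,J]` in `M` vanishes. -/
noncomputable def skeleton (M : Matrix ι ι R) (J : Finset ι) : Matrix ι ι R :=
  (M.submatrix id (↑) : Matrix ι J R) * (M.submatrix (↑) (↑) : Matrix J J R)⁻¹ *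
    (M.submatrix (↑) id : Matrix J ι R)

theorem skeleton_apply (i j : ι) :
    M.skeleton J i j =
      (fun k : J => M i k) ⬝ᵥ (M.submatrix (↑) (↑) : Matrix J J R)⁻¹ *ᵥ fun k : J => M k j := by
  rw [skeleton, Matrix.mul_assoc]
  simp only [mul_apply, dotProduct, mulVec, submatrix_apply, id]

theorem eq_skeleton_of_eq_mul (hW : IsUnit (M.submatrix (↑) (↑) : Matrix J J R).det)
    {Y : Matrix J ι R} (hY : M = (M.submatrix id (↑) : Matrix ι J R) * Y) :
    M = M.skeleton J := by
  have hrows : (M.submatrix (↑) id : Matrix J ι R) = (M.submatrix (↑) (↑) : Matrix J J R) * Y := by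
    conv_lhs => rw [hY]
    rw [submatrix_mul _ _ _ id _ Function.bijective_id]
    simp
  rw [skeleton, hrows, ← Matrix.mul_assoc, Matrix.mul_assoc _ _⁻¹, nonsing_inv_mul _ hW,
    Matrix.mul_one]
  exact hY

theorem submatrix_skeleton_rows (hW : IsUnit (M.submatrix (↑) (↑) : Matrix J J R).det) :
    ((M.skeleton J).submatrix (↑) id : Matrix J ι R) = M.submatrix (↑) id := by
  rw [skeleton, submatrix_mul _ _ _ id _ Function.bijective_id,
    submatrix_mul _ _ _ id _ Function.bijective_id]
  simp [mul_nonsing_inv _ hW]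

theorem submatrix_skeleton_cols (hW : IsUnit (M.submatrix (↑) (↑) : Matrix J J R).det) :
    ((M.skeleton J).submatrix id (↑) : Matrix ι J R) = M.submatrix id (↑) := by
  rw [skeleton, Matrix.mul_assoc, submatrix_mul _ _ _ id _ Function.bijective_id,
    submatrix_mul _ _ _ id _ Function.bijective_id]
  simp [nonsing_inv_mul _ hW]

theorem eq_skeleton_iff (hW : IsUnit (M.submatrix (↑) (↑) : Matrix J J R).det) :
    M = M.skeleton J ↔ ∀ i j, i ∉ J → j ∉ J → M.skeleton J i j = M i j := by
  refine ⟨fun h i j _ _ => (congrFun (congrFun h i) j).symm, fun h => ?_⟩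
  ext i j
  by_cases hi : i ∈ J
  · exact (congrFun (congrFun (submatrix_skeleton_rows hW) ⟨i, hi⟩) j).symm
  by_cases hj : j ∈ J
  · exact (congrFun (congrFun (submatrix_skeleton_cols hW) i) ⟨j, hj⟩).symm
  exact (h i j hi hj).symm

end Skeleton

theorem rank_eq_card_of_eq_skeleton {K : Type*} [Field K] [Fintype ι] {M : Matrix ι ι K}
    {J : Finset ι} (hW : IsUnit (M.submatrix (↑) (↑) : Matrix J J K).det)
    (h : M = M.skeleton J) : M.rank = J.card := by
  refine le_antisymm ?_ ?_
  · calc M.rank = (M.skeleton J).rank := congrArg rank h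
      _ ≤ (M.submatrix (↑) id : Matrix J ι K).rank := rank_mul_le_right _ _
      _ ≤ J.card := (rank_le_card_height _).trans_eq (Fintype.card_coe J)
  · calc J.card = (M.submatrix (↑) (↑) : Matrix J J K).rank :=
          ((rank_of_isUnit _ ((isUnit_iff_isUnit_det _).2 hW)).trans (Fintype.card_coe J)).symm
      _ ≤ M.rank := rank_submatrix_le _ _ _

section RCLike

variable {𝕜 : Type*} [RCLike 𝕜] [Fintype ι] {M : Matrix ι ι 𝕜}

theorem PosSemidef.posDef_submatrix_of_linearIndependent (hM : M.PosSemidef) {J : Finset ι}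
    (h : LinearIndependent 𝕜 (M.submatrix id (↑) : Matrix ι J 𝕜).col) :
    (M.submatrix (↑) (↑) : Matrix J J 𝕜).PosDef := by
  set P : Matrix ι J 𝕜 := (1 : Matrix ι ι 𝕜).submatrix (Equiv.refl ι) (↑)
  have hMP : M * P = M.submatrix id (↑) := mul_submatrix_one _ _ _
  have hPMP : Pᴴ * (M * P) = M.submatrix (↑) (↑) := by
    rw [hMP, conjTranspose_submatrix, conjTranspose_one, one_submatrix_mul]
    rfl
  rw [← hPMP, ← Matrix.mul_assoc]
  exact hM.posDef_conjTranspose_mul_mul (by rw [hMP]; exact mulVec_injective_iff.2 h)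

theorem PosSemidef.exists_posDef_submatrix_eq_skeleton (hM : M.PosSemidef) :
    ∃ J : Finset ι, (M.submatrix (↑) (↑) : Matrix J J 𝕜).PosDef ∧ M = M.skeleton J := by
  obtain ⟨J, hli, Y, hY⟩ := exists_linearIndependent_cols_eq_mul M
  have hW := hM.posDef_submatrix_of_linearIndependent hli
  exact ⟨J, hW, eq_skeleton_of_eq_mul ((isUnit_iff_isUnit_det _).1 hW.isUnit) hY⟩

theorem posSemidef_of_eq_skeleton (hM : M.IsHermitian) {J : Finset ι}
    (hW : (M.submatrix (↑) (↑) : Matrix J J 𝕜).PosDef) (h : M = M.skeleton J) : M.PosSemidef := by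
  have hcols : (M.submatrix id (↑) : Matrix ι J 𝕜) = (M.submatrix (↑) id : Matrix J ι 𝕜)ᴴ := by
    rw [conjTranspose_submatrix, hM.eq]
  rw [h, skeleton, hcols]
  exact hW.inv.posSemidef.conjTranspose_mul_mul_same _

theorem posSemidef_and_rank_eq_iff (hM : M.IsHermitian) (r : ℕ) :
    M.PosSemidef ∧ M.rank = r ↔
      ∃ J : Finset ι, J.card = r ∧ ∃ V : Matrix J J 𝕜, V.PosDef ∧ V⁻¹ = M.submatrix (↑) (↑) ∧
        ∀ i j, i ∉ J → j ∉ J → (fun k : J => M i k) ⬝ᵥ V *ᵥ (fun k : J => M k j) = M i j := by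
  constructor
  · rintro ⟨hpsd, rfl⟩
    obtain ⟨J, hW, h⟩ := hpsd.exists_posDef_submatrix_eq_skeleton
    have hdet := (isUnit_iff_isUnit_det _).1 hW.isUnit
    refine ⟨J, (rank_eq_card_of_eq_skeleton hdet h).symm, _, hW.inv,
      nonsing_inv_nonsing_inv _ hdet, fun i j hi hj => ?_⟩
    rw [← skeleton_apply]
    exact (eq_skeleton_iff hdet).1 h i j hi hj
  · rintro ⟨J, rfl, V, hV, hVW, hschur⟩
    have hW : (M.submatrix (↑) (↑) : Matrix J J 𝕜).PosDef := hVW ▸ hV.inv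
    have hdet := (isUnit_iff_isUnit_det _).1 hW.isUnit
    obtain rfl : V = (M.submatrix (↑) (↑))⁻¹ := by
      rw [← hVW, nonsing_inv_nonsing_inv _ ((isUnit_iff_isUnit_det _).1 hV.isUnit)]
    have h : M = M.skeleton J := (eq_skeleton_iff hdet).2 fun i j hi hj => by
      rw [skeleton_apply]
      exact hschur i j hi hj
    exact ⟨posSemidef_of_eq_skeleton hM hW h, rank_eq_card_of_eq_skeleton hdet h⟩

end RCLike

theorem eq_submatrix_add_diagonal_iff {κ R : Type*} [AddZeroClass R] {A : Matrix ι ι R}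
    (hdiag : ∀ i, A i i = 0) (d : ι → R) {e : κ → ι} (he : Function.Injective e)
    (X : Matrix κ κ R) :
    X = (A + diagonal d).submatrix e e ↔
      (∀ i j, i ≠ j → X i j = A (e i) (e j)) ∧ ∀ i, X i i = d (e i) := by
  rw [← Matrix.ext_iff]
  refine ⟨fun h => ⟨fun i j hij => ?_, fun i => ?_⟩, fun ⟨hoff, hon⟩ i j => ?_⟩
  · simp [h, diagonal_apply_ne _ (he.ne hij)]
  · simp [h, hdiag]
  · rcases eq_or_ne i j with rfl | hij
    · simp [hon, hdiag]
    · simp [hoff i j hij, diagonal_apply_ne _ (he.ne hij)]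

end Matrix

theorem stmt4_general (n : ℕ) (A : Matrix (Fin n) (Fin n) ℝ) (hA : A.IsSymm)
    (hdiag : ∀ i, A i i = 0) (r : ℕ) (d : Fin n → ℝ) :
    ((A + Matrix.diagonal d).PosSemidef ∧ (A + Matrix.diagonal d).rank = r) ↔
      ∃ J : Finset (Fin n), J.card = r ∧
        ∃ V : Matrix J J ℝ, V.PosDef ∧
          (∀ i j : Fin n, i ∉ J → j ∉ J → i ≠ j →
            (fun k : J => A k.val i) ⬝ᵥ V.mulVec (fun l : J => A l.val j) = A i j) ∧
          (∀ i : Fin n, i ∉ J →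
            (fun k : J => A k.val i) ⬝ᵥ V.mulVec (fun l : J => A l.val i) = d i) ∧
          (∀ i j : J, i ≠ j → V⁻¹ i j = A i.val j.val) ∧
          (∀ i : J, V⁻¹ i i = d i.val) := by
  set M := A + diagonal d
  have hM_off : ∀ i j, i ≠ j → M i j = A i j := fun i j hij => by
    simp [M, diagonal_apply_ne _ hij]
  have hM_diag : ∀ i, M i i = d i := fun i => by simp [M, hdiag]
  have hM : M.IsHermitian := (isHermitian_iff_isSymm.2 hA).add (isHermitian_diagonal d)
  rw [posSemidef_and_rank_eq_iff hM]
  refine exists_congr fun J => and_congr_right fun _ => exists_congr fun V => and_congr_right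
    fun _ => ?_
  have hcol : ∀ j ∉ J, (fun k : J => M k j) = fun k : J => A k j := fun j hj =>
    funext fun k => hM_off _ _ (ne_of_mem_of_not_mem k.2 hj)
  have hrow : ∀ i ∉ J, (fun k : J => M i k) = fun k : J => A k i := fun i hi =>
    funext fun k => by rw [hM_off _ _ (ne_of_mem_of_not_mem k.2 hi).symm, hA.apply]
  rw [eq_submatrix_add_diagonal_iff hdiag d Subtype.val_injective]
  constructor
  · rintro ⟨⟨h3, h4⟩, hschur⟩
    refine ⟨fun i j hi hj hij => ?_, fun i hi => ?_, h3, h4⟩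
    · simpa only [hrow i hi, hcol j hj, hM_off i j hij] using hschur i j hi hj
    · simpa only [hrow i hi, hcol i hi, hM_diag] using hschur i i hi hi
  · rintro ⟨h1, h2, h3, h4⟩
    refine ⟨⟨h3, h4⟩, fun i j hi hj => ?_⟩
    rw [hrow i hi, hcol j hj]
    rcases eq_or_ne i j with rfl | hij
    · rw [h2 i hi, hM_diag]
    · rw [h1 i j hi hj hij, hM_off i j hij]

/-- Characterization of feasible solutions of `(P₂)` with objective
value `r` via the system (char_sys). -/
theorem stmt4 (n : ℕ) (hn : 2 ≤ n) (A : Matrix (Fin n) (Fin n) ℝ) (hA : A.IsSymm)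
    (hdiag : ∀ i, A i i = 0) (r : ℕ) (hr1 : 1 ≤ r) (hr2 : r ≤ n - 1) (d : Fin n → ℝ) :
    ((A + Matrix.diagonal d).PosSemidef ∧ (A + Matrix.diagonal d).rank = r) ↔
      ∃ J : Finset (Fin n), J.card = r ∧
        ∃ V : Matrix J J ℝ, V.PosDef ∧
          (∀ i j : Fin n, i ∉ J → j ∉ J → i ≠ j →
            (fun k : J => A k.val i) ⬝ᵥ V.mulVec (fun l : J => A l.val j) = A i j) ∧
          (∀ i : Fin n, i ∉ J →
            (fun k : J => A k.val i) ⬝ᵥ V.mulVec (fun l : J => A l.val i) = d i) ∧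
          (∀ i j : J, i ≠ j → V⁻¹ i j = A i.val j.val) ∧
          (∀ i : J, V⁻¹ i i = d i.val) :=
  stmt4_general n A hA hdiag r d
end

section
/- Suppose K, H ∈ ℝ^{m×n}, D ∈ ℝ^{n×n} is symmetric positive definite, Δ ∈ ℝ^{n×n} is symmetric, ‖H‖_F ≤ ‖K‖_F/2, and ‖Δ‖_F · ‖D⁻¹‖_F ≤ 1/2. Then D + Δ is invertible, and ‖(K+H)(D+Δ)⁻¹(K+H)ᵀ − K·D⁻¹·Kᵀ‖_F ≤ (1/2)·‖K‖_F·‖D⁻¹‖_F·(9·‖K‖_F·‖D⁻¹‖_F·‖Δ‖_F + 5·‖H‖_F). -/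
open Matrix

/-- The Frobenius norm of a real matrix. -/
noncomputable def frob {m n : Type*} [Fintype m] [Fintype n] (A : Matrix m n ℝ) : ℝ :=
  Real.sqrt (∑ i, ∑ j, (A i j) ^ 2)

section Stmt6Aux

attribute [local instance] Matrix.frobeniusSeminormedAddCommGroup
  Matrix.frobeniusNormedAddCommGroup Matrix.frobeniusNormedSpace Matrix.frobeniusNormedRing

lemma frob_eq {m n : Type*} [Fintype m] [Fintype n] (A : Matrix m n ℝ) :
    frob A = ‖A‖ := by
  rw [Matrix.frobenius_norm_def, frob, Real.sqrt_eq_rpow]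
  congr 1
  refine Finset.sum_congr rfl fun i _ => Finset.sum_congr rfl fun j _ => ?_
  rw [Real.norm_eq_abs, Real.rpow_two, sq_abs]

/-- Perturbation bound for `K·D⁻¹·Kᵀ` under perturbations `H` of `K`
and `Δ` of `D`. -/
theorem stmt6 (m n : ℕ) (K H : Matrix (Fin m) (Fin n) ℝ) (D Δ : Matrix (Fin n) (Fin n) ℝ)
    (hD : D.PosDef) (hΔ : Δ.IsSymm) (hH : frob H ≤ frob K / 2)
    (hΔn : frob Δ * frob D⁻¹ ≤ 1 / 2) :
    IsUnit (D + Δ).det ∧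
      frob ((K + H) * (D + Δ)⁻¹ * (K + H)ᵀ - K * D⁻¹ * Kᵀ) ≤
        1 / 2 * frob K * frob D⁻¹ * (9 * frob K * frob D⁻¹ * frob Δ + 5 * frob H) := by
  haveI : CompleteSpace (Matrix (Fin n) (Fin n) ℝ) := FiniteDimensional.complete ℝ _
  simp only [frob_eq] at *
  set k := ‖K‖; set hn := ‖H‖; set d := ‖D⁻¹‖; set δ := ‖Δ‖
  have hDdet : IsUnit D.det := hD.det_pos.ne'.isUnit
  -- invertibility of D + Δ
  have hlt : ‖-(D⁻¹ * Δ)‖ < 1 := by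
    rw [norm_neg]
    calc ‖D⁻¹ * Δ‖ ≤ d * δ := Matrix.frobenius_norm_mul _ _
      _ ≤ 1 / 2 := by linarith [hΔn]
      _ < 1 := by norm_num
  have hu1 : IsUnit ((1 : Matrix (Fin n) (Fin n) ℝ) + D⁻¹ * Δ) := by
    have hu := (Units.oneSub (-(D⁻¹ * Δ)) hlt).isUnit
    rwa [Units.val_oneSub, sub_neg_eq_add] at hu
  have hsum : D + Δ = D * (1 + D⁻¹ * Δ) := by
    rw [mul_add, mul_one, ← mul_assoc, Matrix.mul_nonsing_inv _ hDdet, one_mul]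
  have hU : IsUnit (D + Δ) := by
    rw [hsum]
    exact ((Matrix.isUnit_iff_isUnit_det D).2 hDdet).mul hu1
  have hdet : IsUnit (D + Δ).det := (Matrix.isUnit_iff_isUnit_det _).1 hU
  refine ⟨hdet, ?_⟩
  set S := (D + Δ)⁻¹ with hS
  have hR : S * (D + Δ) = 1 := Matrix.nonsing_inv_mul _ hdet
  have key : S + S * Δ * D⁻¹ = D⁻¹ := by
    have h1 : (S * (D + Δ)) * D⁻¹ = D⁻¹ := by rw [hR, one_mul]
    calc S + S * Δ * D⁻¹ = (S * (D + Δ)) * D⁻¹ := by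
          rw [mul_add, Matrix.add_mul, mul_assoc S D D⁻¹,
            Matrix.mul_nonsing_inv _ hDdet, mul_one]
      _ = D⁻¹ := h1
  have hSeq : S = D⁻¹ - S * Δ * D⁻¹ := by
    rw [eq_sub_iff_add_eq]; exact key
  have hprod : ‖S * Δ * D⁻¹‖ ≤ ‖S‖ * δ * d := by
    calc ‖S * Δ * D⁻¹‖ ≤ ‖S * Δ‖ * d := Matrix.frobenius_norm_mul _ _
      _ ≤ ‖S‖ * δ * d := by
          have := Matrix.frobenius_norm_mul S Δ
          nlinarith [norm_nonneg (D⁻¹ : Matrix (Fin n) (Fin n) ℝ)]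
  have hs : ‖S‖ ≤ 2 * d := by
    have h1 : ‖S‖ ≤ d + ‖S‖ * δ * d := by
      calc ‖S‖ = ‖D⁻¹ - S * Δ * D⁻¹‖ := by rw [← hSeq]
        _ ≤ d + ‖S * Δ * D⁻¹‖ := norm_sub_le _ _
        _ ≤ d + ‖S‖ * δ * d := by linarith [hprod]
    nlinarith [norm_nonneg S, hΔn]
  have hE : ‖S - D⁻¹‖ ≤ 2 * d * δ * d := by
    have hM : S - D⁻¹ = -(S * Δ * D⁻¹) := by conv_lhs => rw [hSeq]; rw [sub_sub_cancel_left]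
    rw [hM, norm_neg]
    calc ‖S * Δ * D⁻¹‖ ≤ ‖S‖ * δ * d := hprod
      _ ≤ 2 * d * δ * d :=
        mul_le_mul_of_nonneg_right (mul_le_mul_of_nonneg_right hs (norm_nonneg _))
          (norm_nonneg _)
  -- expansion
  have hexp : (K + H) * S * (K + H)ᵀ - K * D⁻¹ * Kᵀ =
      K * D⁻¹ * Hᵀ + H * D⁻¹ * Kᵀ + H * D⁻¹ * Hᵀ + (K + H) * (S - D⁻¹) * (K + H)ᵀ := by
    simp only [transpose_add, Matrix.add_mul, Matrix.mul_add, Matrix.mul_sub, Matrix.sub_mul]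
    abel
  have bd : ∀ (A : Matrix (Fin m) (Fin n) ℝ) (B : Matrix (Fin n) (Fin n) ℝ)
      (C : Matrix (Fin m) (Fin n) ℝ), ‖A * B * Cᵀ‖ ≤ ‖A‖ * ‖B‖ * ‖C‖ := by
    intro A B C
    calc ‖A * B * Cᵀ‖ ≤ ‖A * B‖ * ‖Cᵀ‖ := Matrix.frobenius_norm_mul _ _
      _ ≤ ‖A‖ * ‖B‖ * ‖C‖ := by
          rw [Matrix.frobenius_norm_transpose]
          exact mul_le_mul_of_nonneg_right (Matrix.frobenius_norm_mul A B) (norm_nonneg C)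
  have hKH : ‖K + H‖ ≤ k + hn := norm_add_le _ _
  have hnn : (0:ℝ) ≤ k := norm_nonneg _
  have hnh : (0:ℝ) ≤ hn := norm_nonneg _
  have hnd : (0:ℝ) ≤ d := norm_nonneg _
  have hnδ : (0:ℝ) ≤ δ := norm_nonneg _
  have hlast : ‖(K + H) * (S - D⁻¹) * (K + H)ᵀ‖ ≤ (k + hn) * (2 * d * δ * d) * (k + hn) := by
    have h0 := bd (K + H) (S - D⁻¹) (K + H)
    have h1 : ‖K + H‖ * ‖S - D⁻¹‖ * ‖K + H‖ ≤ (k + hn) * (2 * d * δ * d) * (k + hn) := by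
      have e1 : ‖K + H‖ * ‖S - D⁻¹‖ ≤ (k + hn) * (2 * d * δ * d) :=
        mul_le_mul hKH hE (norm_nonneg _) (by positivity)
      exact mul_le_mul e1 hKH (norm_nonneg _) (by positivity)
    linarith
  calc ‖(K + H) * S * (K + H)ᵀ - K * D⁻¹ * Kᵀ‖
      = ‖K * D⁻¹ * Hᵀ + H * D⁻¹ * Kᵀ + H * D⁻¹ * Hᵀ + (K + H) * (S - D⁻¹) * (K + H)ᵀ‖ := by
        rw [hexp]
    _ ≤ ‖K * D⁻¹ * Hᵀ‖ + ‖H * D⁻¹ * Kᵀ‖ + ‖H * D⁻¹ * Hᵀ‖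
        + ‖(K + H) * (S - D⁻¹) * (K + H)ᵀ‖ := by
        calc _ ≤ ‖K * D⁻¹ * Hᵀ + H * D⁻¹ * Kᵀ + H * D⁻¹ * Hᵀ‖
                + ‖(K + H) * (S - D⁻¹) * (K + H)ᵀ‖ := norm_add_le _ _
          _ ≤ _ := by
              have := norm_add_le (K * D⁻¹ * Hᵀ + H * D⁻¹ * Kᵀ) (H * D⁻¹ * Hᵀ)
              have := norm_add_le (K * D⁻¹ * Hᵀ) (H * D⁻¹ * Kᵀ)
              linarith
    _ ≤ 1 / 2 * k * d * (9 * k * d * δ + 5 * hn) := by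
        have b1 := bd K D⁻¹ H
        have b2 := bd H D⁻¹ K
        have b3 := bd H D⁻¹ H
        have e1 : hn * d * hn ≤ 1 / 2 * k * hn * d := by nlinarith [mul_nonneg (mul_nonneg hnd hnh) (by linarith : (0:ℝ) ≤ k / 2 - hn)]
        have e2 : (k + hn) * (2 * d * δ * d) * (k + hn) ≤ 9 / 2 * (k * d) * (k * d) * δ := by
          have inner : 0 ≤ 9 / 2 * k ^ 2 - 2 * (k + hn) ^ 2 := by nlinarith
          have h3 := mul_nonneg (mul_nonneg (mul_nonneg hnd hnd) hnδ) inner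
          linarith [(by ring : (k + hn) * (2 * d * δ * d) * (k + hn) =
            9 / 2 * (k * d) * (k * d) * δ - d * d * δ * (9 / 2 * k ^ 2 - 2 * (k + hn) ^ 2)), h3]
        linarith [hlast, e1, e2, b1, b2, b3,
          (by ring : 1 / 2 * k * d * (9 * k * d * δ + 5 * hn) = 9 / 2 * (k * d) * (k * d) * δ + 2 * (k * d * hn) + 1 / 2 * k * hn * d)]

end Stmt6Aux
end

section
/- Let G be a graph and let (A, X) be the (P3) input construction for G, with A ∈ ℝ^{3n'×3n'}. If G is 3-colorable, then there exists a symmetric matrix L ∈ ℝ^{3n'×3n'} that fits X such that A + L is positive semidefinite and rank(A + L) ≤ 3. -/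
/-! A 3-colouring of `G` extends to the Peeters supergraph `G'`: each gadget on a pair `{i, j}`
can be coloured whatever the colours of `i` and `j` are. For such a colouring `c`, the matrix
`M((v,μ),(w,ν)) = [c v = c w]` is the Gram matrix of the vectors `e_{c v} ∈ ℝ³`, hence positive
semidefinite of rank at most 3. It is `1` on the diagonal blocks, where `A` is `1` off the
diagonal, and `0` between adjacent vertices of `G'`, so `L = M - A` fits `X`. -/

open Matrix

noncomputable section

/-- Unordered pairs of distinct vertices of `Fin N`, represented by ordered pairs
`(i, j)` with `i < j`. -/
abbrev Pairs (N : ℕ) := {p : Fin N × Fin N // p.1 < p.2}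

/-- Vertices of the Peeters supergraph: the original vertices together with, for each
unordered pair `{i,j}` of distinct vertices, four new vertices `a, b, c, d`
(encoded as `(q, 0), (q, 1), (q, 2), (q, 3)`). -/
abbrev PV (N : ℕ) := Fin N ⊕ (Pairs N × Fin 4)

/-- The generating relation for the edges of the Peeters supergraph: the original edges
together with, for each unordered pair `q = {i,j}`, the nine edges
`{i,a}, {i,b}, {a,b}, {j,c}, {j,d}, {c,d}, {a,j}, {i,d}, {b,c}`. -/
def peetersRel (N : ℕ) (G : SimpleGraph (Fin N)) : PV N → PV N → Prop := fun x y =>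
  (∃ i j : Fin N, G.Adj i j ∧ x = Sum.inl i ∧ y = Sum.inl j) ∨
  (∃ q : Pairs N,
    (x = Sum.inl q.val.1 ∧ y = Sum.inr (q, 0)) ∨
    (x = Sum.inl q.val.1 ∧ y = Sum.inr (q, 1)) ∨
    (x = Sum.inr (q, 0) ∧ y = Sum.inr (q, 1)) ∨
    (x = Sum.inl q.val.2 ∧ y = Sum.inr (q, 2)) ∨
    (x = Sum.inl q.val.2 ∧ y = Sum.inr (q, 3)) ∨
    (x = Sum.inr (q, 2) ∧ y = Sum.inr (q, 3)) ∨
    (x = Sum.inr (q, 0) ∧ y = Sum.inl q.val.2) ∨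
    (x = Sum.inl q.val.1 ∧ y = Sum.inr (q, 3)) ∨
    (x = Sum.inr (q, 1) ∧ y = Sum.inr (q, 2)))

/-- The Peeters supergraph `G'` of `G`. -/
def peetersGraph (N : ℕ) (G : SimpleGraph (Fin N)) : SimpleGraph (PV N) :=
  SimpleGraph.fromRel (peetersRel N G)

/-- Row/column indices of the `(P3)` input construction: pairs `(v, μ)` with
`v ∈ V(G')` and `μ ∈ {1,2,3}`. -/
abbrev Idx (N : ℕ) := PV N × Fin 3

/-- The matrix `A` of the `(P3)` input construction:
`A((v,μ),(w,ν)) = 1` if `v = w` and `μ ≠ ν`, and `0` otherwise. -/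
def AP3 (N : ℕ) : Matrix (Idx N) (Idx N) ℝ := fun p q =>
  if p.1 = q.1 ∧ p.2 ≠ q.2 then 1 else 0

/-- `L` fits the edge set `X` of the `(P3)` input construction, i.e. `L` vanishes on
all pairs `{(v,μ),(w,ν)}` with `{v,w} ∈ E(G')` and on all pairs `{(v,μ),(v,ν)}` with
`μ ≠ ν`. -/
def FitsX (N : ℕ) (G : SimpleGraph (Fin N)) (L : Matrix (Idx N) (Idx N) ℝ) : Prop :=
  (∀ p q : Idx N, (peetersGraph N G).Adj p.1 q.1 → L p q = 0) ∧
  (∀ (v : PV N) (μ ν : Fin 3), μ ≠ ν → L (v, μ) (v, ν) = 0)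

namespace Matrix

variable {ι κ : Type*} (R : Type*) [DecidableEq κ]

def colorIndicator [Zero R] [One R] (f : ι → κ) : Matrix κ ι R :=
  of fun k p => if f p = k then 1 else 0

def sameColor [Zero R] [One R] (f : ι → κ) : Matrix ι ι R :=
  of fun p q => if f p = f q then 1 else 0

@[simp]
lemma sameColor_apply [Zero R] [One R] (f : ι → κ) (p q : ι) :
    sameColor R f p q = if f p = f q then 1 else 0 := rfl

lemma sameColor_isSymm [Zero R] [One R] (f : ι → κ) : (sameColor R f).IsSymm := by
  ext p q
  simp [eq_comm]

lemma sameColor_eq_conjTranspose_mul [Fintype κ] [Semiring R] [StarRing R] (f : ι → κ) :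
    sameColor R f = (colorIndicator R f)ᴴ * colorIndicator R f := by
  ext p q
  rw [sameColor_apply, mul_apply, Finset.sum_eq_single (f p)]
  · by_cases h : f p = f q <;> simp [colorIndicator, h, eq_comm]
  · intro k _ hk
    simp [colorIndicator, Ne.symm hk]
  · simp

lemma posSemidef_sameColor [Finite ι] [Fintype κ] [Ring R] [PartialOrder R] [StarRing R]
    [StarOrderedRing R] (f : ι → κ) : (sameColor R f).PosSemidef := by
  rw [sameColor_eq_conjTranspose_mul]
  exact posSemidef_conjTranspose_mul_self _

lemma rank_sameColor_le [Fintype ι] [Fintype κ] [CommRing R] [StarRing R] [StrongRankCondition R]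
    (f : ι → κ) : (sameColor R f).rank ≤ Fintype.card κ := by
  rw [sameColor_eq_conjTranspose_mul]
  exact (rank_mul_le_left _ _).trans (rank_le_card_width _)

end Matrix

/-- When `x ≠ y`, `-(x + y)` is the third colour of `Fin 3`. -/
def peetersGadget (x y : Fin 3) : Fin 4 → Fin 3 :=
  if x = y then ![x + 1, x + 2, x + 1, x + 2] else ![-(x + y), y, x, -(x + y)]

lemma peetersGadget_proper : ∀ x y : Fin 3,
    x ≠ peetersGadget x y 0 ∧ x ≠ peetersGadget x y 1 ∧
    peetersGadget x y 0 ≠ peetersGadget x y 1 ∧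
    y ≠ peetersGadget x y 2 ∧ y ≠ peetersGadget x y 3 ∧
    peetersGadget x y 2 ≠ peetersGadget x y 3 ∧
    peetersGadget x y 0 ≠ y ∧ x ≠ peetersGadget x y 3 ∧
    peetersGadget x y 1 ≠ peetersGadget x y 2 := by
  decide

def peetersExtend {N : ℕ} (c : Fin N → Fin 3) : PV N → Fin 3
  | Sum.inl i => c i
  | Sum.inr (q, k) => peetersGadget (c q.val.1) (c q.val.2) k

lemma peetersExtend_ne_of_peetersRel {N : ℕ} {G : SimpleGraph (Fin N)} (c : G.Coloring (Fin 3))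
    {u v : PV N} (h : peetersRel N G u v) : peetersExtend c u ≠ peetersExtend c v := by
  rcases h with ⟨i, j, hij, rfl, rfl⟩ | ⟨q, h⟩
  · exact c.valid hij
  · obtain ⟨h1, h2, h3, h4, h5, h6, h7, h8, h9⟩ := peetersGadget_proper (c q.val.1) (c q.val.2)
    rcases h with ⟨rfl, rfl⟩ | ⟨rfl, rfl⟩ | ⟨rfl, rfl⟩ | ⟨rfl, rfl⟩ | ⟨rfl, rfl⟩ |
      ⟨rfl, rfl⟩ | ⟨rfl, rfl⟩ | ⟨rfl, rfl⟩ | ⟨rfl, rfl⟩ <;>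
      assumption

lemma peetersGraph_colorable {N : ℕ} {G : SimpleGraph (Fin N)} (hG : G.Colorable 3) :
    (peetersGraph N G).Colorable 3 := by
  obtain ⟨c⟩ := hG
  refine ⟨.mk (peetersExtend c) fun {u v} huv => ?_⟩
  rcases (SimpleGraph.fromRel_adj _ u v).mp huv with ⟨_, h | h⟩
  · exact peetersExtend_ne_of_peetersRel c h
  · exact (peetersExtend_ne_of_peetersRel c h).symm

lemma AP3_isSymm (N : ℕ) : (AP3 N).IsSymm := by
  ext p q
  simp only [transpose_apply, AP3, eq_comm, ne_comm]

lemma fitsX_sameColor_sub_AP3 {N : ℕ} {G : SimpleGraph (Fin N)}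
    (c : (peetersGraph N G).Coloring (Fin 3)) :
    FitsX N G (sameColor ℝ (fun p : Idx N => c p.1) - AP3 N) := by
  refine ⟨fun p q hpq => ?_, fun v μ ν hμν => ?_⟩
  · simp [AP3, c.valid hpq, hpq.ne]
  · simp [AP3, hμν]

/-- If `G` is 3-colorable, then the `(P3)` input construction admits a
symmetric `L` fitting `X` with `A + L ⪰ 0` and `rank (A + L) ≤ 3`. -/
theorem stmt7 (N : ℕ) (G : SimpleGraph (Fin N)) (hG : G.Colorable 3) :
    ∃ L : Matrix (Idx N) (Idx N) ℝ, L.IsSymm ∧ FitsX N G L ∧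
      (AP3 N + L).PosSemidef ∧ (AP3 N + L).rank ≤ 3 := by
  obtain ⟨c⟩ := peetersGraph_colorable hG
  let f : Idx N → Fin 3 := fun p => c p.1
  refine ⟨sameColor ℝ f - AP3 N, (sameColor_isSymm ℝ f).sub (AP3_isSymm N),
    fitsX_sameColor_sub_AP3 c, ?_, ?_⟩ <;> rw [add_sub_cancel]
  · exact posSemidef_sameColor ℝ f
  · simpa using rank_sameColor_le ℝ f

end
end

section
/- Let A ∈ ℝ^{n×n} be symmetric, let X ⊆ {{i,j} : 1 ≤ i < j ≤ n}, let r ∈ {1,…,n}, let X^c := {{i,j} : 1 ≤ i < j ≤ n} ∖ X and m := |X^c|. Let K ∈ {0,1}^{n×m} be the node-edge incidence matrix of X^c (the column for {i,j} ∈ X^c has 1's exactly in rows i and j), and let K̄ ∈ {−1,0,1}^{n×m} be a node-arc incidence matrix for any orientation of X^c (the column for {i,j} has a +1 in one of rows i, j and a −1 in the other, zeros elsewhere). Define B := [[0, 0, Kᵀ],[0, 0, K̄ᵀ],[K, K̄, A]] ∈ ℝ^{(2m+n)×(2m+n)}. Then the following are equivalent: (i) there exists a symmetric R ∈ ℝ^{n×n}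 that fits X such that A + R is positive semidefinite and rank(A + R) ≤ r; (ii) there exist u, v ∈ ℝ^m and d ∈ ℝⁿ such that B + Diag([u; v; d]) is positive semidefinite and rank(B + Diag([u; v; d])) ≤ 2m + r. -/
/-!
Write `W = [K K̄]` and `T = Diag([u; v])`, so that `B + Diag([u; v; d])` is the block matrix
`[[T, Wᵀ], [W, A + Diag d]]`. Every column of `K` and `K̄` has a nonzero entry, so positive
semidefiniteness forces `T ≻ 0`. The Schur complement then shows that `B + Diag([u; v; d])` is
positive semidefinite of rank `2m + s` exactly when `A + R` is positive semidefinite of rank `s`,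
where `R = Diag d - W T⁻¹ Wᵀ`. For `i < j` the entry `R i j` vanishes if `{i, j} ∈ X` and equals
`1/v_e - 1/u_e` for the edge `e = {i, j}` of `X^c`; conversely every symmetric `R` fitting `X`
arises this way, choosing `u_e, v_e > 0` with prescribed difference of reciprocals and `d` to match
the diagonal.
-/

open Matrix

noncomputable section

/-- Unordered pairs `{i,j}` with `1 ≤ i < j ≤ n`, encoded as ordered pairs with
`i < j`. -/
abbrev PairIdx (n : ℕ) := {p : Fin n × Fin n // p.1 < p.2}

/-- The complement `X^c` of an edge set `X`, as an index type. -/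
abbrev Xc (n : ℕ) (X : Finset (PairIdx n)) := {p : PairIdx n // p ∉ X}

/-- The off-diagonal block `W = [K K̄]` combining the node-edge incidence matrix `K`
and a node-arc incidence matrix `K̄` of `X^c`. -/
def Wblock (n : ℕ) (X : Finset (PairIdx n)) (K Kbar : Matrix (Fin n) (Xc n X) ℝ) :
    Matrix (Fin n) (Xc n X ⊕ Xc n X) ℝ := fun i => Sum.elim (K i) (Kbar i)

/-- The matrix `B = [[0, 0, Kᵀ],[0, 0, K̄ᵀ],[K, K̄, A]]` of the reduction of `(P3)`
to `(P2)`. -/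
def Bred (n : ℕ) (X : Finset (PairIdx n)) (A : Matrix (Fin n) (Fin n) ℝ)
    (K Kbar : Matrix (Fin n) (Xc n X) ℝ) :
    Matrix ((Xc n X ⊕ Xc n X) ⊕ Fin n) ((Xc n X ⊕ Xc n X) ⊕ Fin n) ℝ :=
  Matrix.fromBlocks 0 (Wblock n X K Kbar)ᵀ (Wblock n X K Kbar) A

def Submodule.prodEquiv {R M N : Type*} [Semiring R] [AddCommMonoid M] [AddCommMonoid N]
    [Module R M] [Module R N] (p : Submodule R M) (q : Submodule R N) :
    p.prod q ≃ₗ[R] p × q where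
  toFun x := (⟨x.1.1, x.2.1⟩, ⟨x.1.2, x.2.2⟩)
  invFun y := ⟨(y.1.1, y.2.1), ⟨y.1.2, y.2.2⟩⟩
  left_inv _ := rfl
  right_inv _ := rfl
  map_add' _ _ := rfl
  map_smul' _ _ := rfl

namespace Matrix

theorem IsSymm.ext_of_lt {α ι : Type*} [LinearOrder ι] {M N : Matrix ι ι α} (hM : M.IsSymm)
    (hN : N.IsSymm) (hdiag : ∀ i, M i i = N i i) (hlt : ∀ i j, i < j → M i j = N i j) : M = N := by
  ext i j
  rcases lt_trichotomy i j with h | rfl | h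
  · exact hlt i j h
  · exact hdiag i
  · rw [← hM.apply, ← hN.apply, hlt j i h]

variable {K : Type*} [Field K]

theorem rank_fromBlocks_zero_zero {m₁ m₂ n₁ n₂ : Type*} [Fintype n₁] [Fintype n₂]
    (A : Matrix m₁ n₁ K) (D : Matrix m₂ n₂ K) :
    (fromBlocks A 0 0 D).rank = A.rank + D.rank := by
  let e₁ := LinearEquiv.sumArrowLequivProdArrow n₁ n₂ K K
  let e₂ := LinearEquiv.sumArrowLequivProdArrow m₁ m₂ K K
  have h : (fromBlocks A 0 0 D).mulVecLin =
      e₂.symm.toLinearMap ∘ₗ (A.mulVecLin.prodMap D.mulVecLin) ∘ₗ e₁.toLinearMap := by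
    ext x (i | i) <;> simp [e₁, e₂, fromBlocks_mulVec, LinearEquiv.sumArrowLequivProdArrow,
      Equiv.sumArrowEquivProdArrow]
  rw [rank, h, LinearMap.range_comp, LinearMap.range_comp_of_range_eq_top _ e₁.range,
    LinearEquiv.finrank_map_eq, LinearMap.range_prodMap, (Submodule.prodEquiv _ _).finrank_eq,
    Module.finrank_prod, rank, rank]

variable {l m n : Type*} [Fintype l] [Fintype m] [Fintype n]
  [DecidableEq l] [DecidableEq m] [DecidableEq n]

theorem rank_fromBlocks_of_isUnit_det₁₁ {A : Matrix m m K} (hA : IsUnit A.det)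
    (B : Matrix m n K) (C : Matrix l m K) (D : Matrix l n K) :
    (fromBlocks A B C D).rank = Fintype.card m + (D - C * A⁻¹ * B).rank := by
  let _ := A.invertibleOfIsUnitDet hA
  have hL : IsUnit (fromBlocks 1 0 (C * ⅟A) (1 : Matrix l l K)).det := by simp
  have hU : IsUnit (fromBlocks 1 (⅟A * B) 0 (1 : Matrix n n K)).det := by simp
  rw [fromBlocks_eq_of_invertible₁₁, Matrix.mul_assoc, rank_mul_eq_right_of_isUnit_det _ _ hL,
    rank_mul_eq_left_of_isUnit_det _ _ hU, rank_fromBlocks_zero_zero, rank_of_isUnit A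
    ((isUnit_iff_isUnit_det A).2 hA), invOf_eq_nonsing_inv]

theorem inv_diagonal_of_ne_zero {t : m → K} (ht : ∀ i, t i ≠ 0) :
    (diagonal t)⁻¹ = diagonal t⁻¹ := by
  refine inv_eq_right_inv ?_
  rw [diagonal_mul_diagonal, ← diagonal_one]
  exact congrArg diagonal (funext fun i => mul_inv_cancel₀ (ht i))

open scoped ComplexOrder in
theorem PosSemidef.diag_pos_of_ne_zero {𝕜 : Type*} [RCLike 𝕜] {M : Matrix n n 𝕜}
    (hM : M.PosSemidef) {i j : n} (hji : M j i ≠ 0) : 0 < M i i := by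
  refine hM.diag_nonneg.lt_of_ne fun hii => hji ?_
  have hcol : M *ᵥ Pi.single i 1 = 0 :=
    (hM.dotProduct_mulVec_zero_iff _).1 (by simpa [mulVec_single_one] using hii.symm)
  simpa [mulVec_single_one] using congrFun hcol j

end Matrix

section Reduction

variable {n : ℕ} {X : Finset (PairIdx n)}

theorem PairIdx.eq_of_mem_ends {p e : PairIdx n} (h₁ : p.val.1 = e.val.1 ∨ p.val.1 = e.val.2)
    (h₂ : p.val.2 = e.val.1 ∨ p.val.2 = e.val.2) : p = e := by
  obtain ⟨⟨a, b⟩, hab : a < b⟩ := p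
  obtain ⟨⟨c, d⟩, hcd : c < d⟩ := e
  dsimp only at h₁ h₂
  rw [Subtype.mk.injEq, Prod.mk.injEq]
  omega

theorem mul_apply_pair_eq_zero {M : Matrix (Fin n) (Xc n X) ℝ}
    (hM : ∀ i e, M i e ≠ 0 → i = e.val.val.1 ∨ i = e.val.val.2) {p : PairIdx n} {e : Xc n X}
    (hp : e.val ≠ p) : M p.val.1 e * M p.val.2 e = 0 := by
  by_contra hne
  obtain ⟨h₁, h₂⟩ := mul_ne_zero_iff.1 hne
  exact hp (PairIdx.eq_of_mem_ends (hM _ _ h₁) (hM _ _ h₂)).symm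

def IsEdgeIncidence (K : Matrix (Fin n) (Xc n X) ℝ) : Prop :=
  ∀ (i : Fin n) (e : Xc n X), K i e = if i = e.val.val.1 ∨ i = e.val.val.2 then 1 else 0

def IsArcIncidence (Kbar : Matrix (Fin n) (Xc n X) ℝ) : Prop :=
  ∀ e : Xc n X,
    ((Kbar e.val.val.1 e = 1 ∧ Kbar e.val.val.2 e = -1) ∨
      (Kbar e.val.val.1 e = -1 ∧ Kbar e.val.val.2 e = 1)) ∧
    ∀ i : Fin n, i ≠ e.val.val.1 → i ≠ e.val.val.2 → Kbar i e = 0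

theorem IsEdgeIncidence.mul_apply_pair {K : Matrix (Fin n) (Xc n X) ℝ} (hK : IsEdgeIncidence K)
    (p : PairIdx n) (e : Xc n X) :
    K p.val.1 e * K p.val.2 e = if e.val = p then 1 else 0 := by
  split_ifs with h
  · subst h; simp [hK _ e]
  · refine mul_apply_pair_eq_zero (fun i e hi => ?_) h
    by_contra hi'
    exact hi (by rw [hK i e, if_neg hi'])

theorem IsArcIncidence.mul_apply_pair {Kbar : Matrix (Fin n) (Xc n X) ℝ}
    (hKbar : IsArcIncidence Kbar) (p : PairIdx n) (e : Xc n X) :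
    Kbar p.val.1 e * Kbar p.val.2 e = if e.val = p then -1 else 0 := by
  split_ifs with h
  · subst h
    rcases (hKbar e).1 with ⟨h₁, h₂⟩ | ⟨h₁, h₂⟩ <;> simp [h₁, h₂]
  · refine mul_apply_pair_eq_zero (fun i e hi => ?_) h
    by_contra hi'
    exact hi ((hKbar e).2 i (fun h => hi' (.inl h)) (fun h => hi' (.inr h)))

theorem sum_ite_val_eq (p : PairIdx n) (f : Xc n X → ℝ) :
    ∑ e : Xc n X, (if e.val = p then f e else 0) = if h : p ∈ X then 0 else f ⟨p, h⟩ := by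
  split_ifs with hp
  · exact Finset.sum_eq_zero fun e _ => if_neg fun he => e.prop (by rwa [he])
  · rw [Fintype.sum_eq_single ⟨p, hp⟩ fun e he => if_neg fun he' => he (Subtype.ext he')]
    simp

theorem Wblock_mul_diagonal_mul_transpose_apply_pair {K Kbar : Matrix (Fin n) (Xc n X) ℝ}
    (hK : IsEdgeIncidence K) (hKbar : IsArcIncidence Kbar) (c : Xc n X ⊕ Xc n X → ℝ)
    (p : PairIdx n) :
    (Wblock n X K Kbar * diagonal c * (Wblock n X K Kbar)ᵀ) p.val.1 p.val.2 =
      if h : p ∈ X then 0 else c (.inl ⟨p, h⟩) - c (.inr ⟨p, h⟩) := by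
  calc (Wblock n X K Kbar * diagonal c * (Wblock n X K Kbar)ᵀ) p.val.1 p.val.2
      = ∑ e : Xc n X, (K p.val.1 e * K p.val.2 e) * c (.inl e) +
          ∑ e : Xc n X, (Kbar p.val.1 e * Kbar p.val.2 e) * c (.inr e) := by
        rw [mul_apply, Fintype.sum_sum_type]
        simp only [mul_diagonal, Wblock, transpose_apply, Sum.elim_inl, Sum.elim_inr]
        congr 1 <;> exact Finset.sum_congr rfl fun e _ => by ring
    _ = ∑ e : Xc n X, (if e.val = p then c (.inl e) else 0) -
          ∑ e : Xc n X, (if e.val = p then c (.inr e) else 0) := by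
        simp only [hK.mul_apply_pair, hKbar.mul_apply_pair, ite_mul, one_mul, zero_mul,
          neg_one_mul, sub_eq_add_neg, ← Finset.sum_neg_distrib, neg_ite, neg_zero]
    _ = _ := by rw [sum_ite_val_eq, sum_ite_val_eq]; split_ifs <;> simp

def schurCorrection (K Kbar : Matrix (Fin n) (Xc n X) ℝ) (t : Xc n X ⊕ Xc n X → ℝ)
    (d : Fin n → ℝ) : Matrix (Fin n) (Fin n) ℝ :=
  diagonal d - Wblock n X K Kbar * diagonal t⁻¹ * (Wblock n X K Kbar)ᵀ

theorem schurCorrection_isSymm (K Kbar : Matrix (Fin n) (Xc n X) ℝ) (t : Xc n X ⊕ Xc n X → ℝ)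
    (d : Fin n → ℝ) : (schurCorrection K Kbar t d).IsSymm := by
  refine (isSymm_diagonal d).sub ?_
  rw [IsSymm, transpose_mul, transpose_mul, transpose_transpose, diagonal_transpose,
    Matrix.mul_assoc]

theorem schurCorrection_apply_pair {K Kbar : Matrix (Fin n) (Xc n X) ℝ} (hK : IsEdgeIncidence K)
    (hKbar : IsArcIncidence Kbar) (t : Xc n X ⊕ Xc n X → ℝ) (d : Fin n → ℝ) (p : PairIdx n) :
    schurCorrection K Kbar t d p.val.1 p.val.2 =
      if h : p ∈ X then 0 else (t (.inr ⟨p, h⟩))⁻¹ - (t (.inl ⟨p, h⟩))⁻¹ := by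
  rw [schurCorrection, Matrix.sub_apply, diagonal_apply_ne _ p.prop.ne,
    Wblock_mul_diagonal_mul_transpose_apply_pair hK hKbar]
  split_ifs <;> simp

theorem exists_schurCorrection_eq {K Kbar : Matrix (Fin n) (Xc n X) ℝ} (hK : IsEdgeIncidence K)
    (hKbar : IsArcIncidence Kbar) {R : Matrix (Fin n) (Fin n) ℝ} (hR : R.IsSymm)
    (hRX : ∀ p ∈ X, R p.val.1 p.val.2 = 0) :
    ∃ t d, (∀ s, 0 < t s) ∧ schurCorrection K Kbar t d = R := by
  let r (e : Xc n X) : ℝ := R e.val.val.1 e.val.val.2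
  -- `1/u_e` and `1/v_e`: positive, with difference `-r_e`
  let c : Xc n X ⊕ Xc n X → ℝ := Sum.elim (fun e => |r e| - r e + 1) (fun e => |r e| + 1)
  have hc : ∀ s, 0 < c s := by
    rintro (e | e)
    · exact add_pos_of_nonneg_of_pos (sub_nonneg.2 (le_abs_self _)) one_pos
    · exact add_pos_of_nonneg_of_pos (abs_nonneg _) one_pos
  refine ⟨c⁻¹, fun i => R i i + (Wblock n X K Kbar * diagonal c * (Wblock n X K Kbar)ᵀ) i i,
    fun s => inv_pos.2 (hc s), (schurCorrection_isSymm K Kbar _ _).ext_of_lt hR (fun i => ?_) ?_⟩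
  · simp [schurCorrection]
  · intro i j hij
    rw [schurCorrection_apply_pair hK hKbar _ _ ⟨(i, j), hij⟩]
    split_ifs with h
    · exact (hRX _ h).symm
    · simp [c, r]

theorem Bred_add_diagonal (A : Matrix (Fin n) (Fin n) ℝ) (K Kbar : Matrix (Fin n) (Xc n X) ℝ)
    (t : Xc n X ⊕ Xc n X → ℝ) (d : Fin n → ℝ) :
    Bred n X A K Kbar + diagonal (Sum.elim t d) =
      fromBlocks (diagonal t) (Wblock n X K Kbar)ᵀ (Wblock n X K Kbar) (A + diagonal d) := by
  rw [Bred, ← fromBlocks_diagonal, fromBlocks_add, zero_add, add_zero, add_zero]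

theorem posSemidef_Bred_add_diagonal_iff (A : Matrix (Fin n) (Fin n) ℝ)
    (K Kbar : Matrix (Fin n) (Xc n X) ℝ) {t : Xc n X ⊕ Xc n X → ℝ} (ht : ∀ s, 0 < t s)
    (d : Fin n → ℝ) :
    (Bred n X A K Kbar + diagonal (Sum.elim t d)).PosSemidef ↔
      (A + schurCorrection K Kbar t d).PosSemidef := by
  have hT : (diagonal t).PosDef := posDef_diagonal_iff.2 ht
  let _ := hT.isUnit.invertible
  have := hT.fromBlocks₁₁ (Wblock n X K Kbar)ᵀ (A + diagonal d)
  simp only [conjTranspose_eq_transpose_of_trivial, transpose_transpose] at this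
  rw [Bred_add_diagonal, this, schurCorrection, add_sub_assoc,
    inv_diagonal_of_ne_zero fun s => (ht s).ne']

theorem rank_Bred_add_diagonal (A : Matrix (Fin n) (Fin n) ℝ)
    (K Kbar : Matrix (Fin n) (Xc n X) ℝ) {t : Xc n X ⊕ Xc n X → ℝ} (ht : ∀ s, t s ≠ 0)
    (d : Fin n → ℝ) :
    (Bred n X A K Kbar + diagonal (Sum.elim t d)).rank =
      2 * Fintype.card (Xc n X) + (A + schurCorrection K Kbar t d).rank := by
  have hT : IsUnit (diagonal t).det := by
    rw [det_diagonal]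
    exact isUnit_iff_ne_zero.2 (Finset.prod_ne_zero_iff.2 fun s _ => ht s)
  rw [Bred_add_diagonal, rank_fromBlocks_of_isUnit_det₁₁ hT, inv_diagonal_of_ne_zero ht,
    Fintype.card_sum, two_mul, schurCorrection, add_sub_assoc]

theorem pos_of_posSemidef_Bred_add_diagonal {A : Matrix (Fin n) (Fin n) ℝ}
    {K Kbar : Matrix (Fin n) (Xc n X) ℝ} (hK : IsEdgeIncidence K) (hKbar : IsArcIncidence Kbar)
    {t : Xc n X ⊕ Xc n X → ℝ} {d : Fin n → ℝ}
    (h : (Bred n X A K Kbar + diagonal (Sum.elim t d)).PosSemidef) (s : Xc n X ⊕ Xc n X) :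
    0 < t s := by
  obtain ⟨i, hi⟩ : ∃ i, Wblock n X K Kbar i s ≠ 0 := by
    rcases s with e | e
    · exact ⟨e.val.val.1, by simp [Wblock, hK _ e]⟩
    · refine ⟨e.val.val.1, ?_⟩
      rcases (hKbar e).1 with ⟨h₁, -⟩ | ⟨h₁, -⟩ <;> simp [Wblock, h₁]
  rw [Bred_add_diagonal] at h
  simpa using h.diag_pos_of_ne_zero (i := .inl s) (j := .inr i) (by simpa using hi)

end Reduction

theorem stmt14_general (n : ℕ) (A : Matrix (Fin n) (Fin n) ℝ)
    (X : Finset (PairIdx n)) (r : ℕ)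
    (K Kbar : Matrix (Fin n) (Xc n X) ℝ)
    (hK : ∀ (i : Fin n) (e : Xc n X),
      K i e = if i = e.val.val.1 ∨ i = e.val.val.2 then 1 else 0)
    (hKbar : ∀ e : Xc n X,
      ((Kbar e.val.val.1 e = 1 ∧ Kbar e.val.val.2 e = -1) ∨
        (Kbar e.val.val.1 e = -1 ∧ Kbar e.val.val.2 e = 1)) ∧
      ∀ i : Fin n, i ≠ e.val.val.1 → i ≠ e.val.val.2 → Kbar i e = 0) :
    (∃ R : Matrix (Fin n) (Fin n) ℝ, R.IsSymm ∧ (∀ p ∈ X, R p.val.1 p.val.2 = 0) ∧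
        (A + R).PosSemidef ∧ (A + R).rank ≤ r) ↔
    (∃ (u v : Xc n X → ℝ) (d : Fin n → ℝ),
        (Bred n X A K Kbar + Matrix.diagonal (Sum.elim (Sum.elim u v) d)).PosSemidef ∧
        (Bred n X A K Kbar + Matrix.diagonal (Sum.elim (Sum.elim u v) d)).rank ≤
          2 * Fintype.card (Xc n X) + r) := by
  constructor
  · rintro ⟨R, hRsymm, hRX, hpsd, hrank⟩
    obtain ⟨t, d, ht, rfl⟩ := exists_schurCorrection_eq hK hKbar hRsymm hRX
    refine ⟨t ∘ Sum.inl, t ∘ Sum.inr, d, ?_, ?_⟩ <;> rw [Sum.elim_comp_inl_inr]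
    · exact (posSemidef_Bred_add_diagonal_iff A K Kbar ht d).2 hpsd
    · rw [rank_Bred_add_diagonal A K Kbar (fun s => (ht s).ne')]
      omega
  · rintro ⟨u, v, d, hpsd, hrank⟩
    have ht := pos_of_posSemidef_Bred_add_diagonal hK hKbar hpsd
    refine ⟨schurCorrection K Kbar (Sum.elim u v) d, schurCorrection_isSymm K Kbar _ d,
      fun p hp => by simp [schurCorrection_apply_pair hK hKbar, hp],
      (posSemidef_Bred_add_diagonal_iff A K Kbar ht d).1 hpsd, ?_⟩
    rw [rank_Bred_add_diagonal A K Kbar (fun s => (ht s).ne')] at hrank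
    omega

/-- Reduction of `(P3)` to `(P2)`: with `K` the node-edge incidence
matrix of `X^c` and `K̄` a node-arc incidence matrix for any orientation of `X^c`,
the problem `(P3)` for `(A, X, r)` is feasible iff the problem `(P2)` for
`(B, 2m + r)` is feasible. -/
theorem stmt14 (n : ℕ) (A : Matrix (Fin n) (Fin n) ℝ) (hA : A.IsSymm)
    (X : Finset (PairIdx n)) (r : ℕ) (hr1 : 1 ≤ r) (hr2 : r ≤ n)
    (K Kbar : Matrix (Fin n) (Xc n X) ℝ)
    (hK : ∀ (i : Fin n) (e : Xc n X),
      K i e = if i = e.val.val.1 ∨ i = e.val.val.2 then 1 else 0)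
    (hKbar : ∀ e : Xc n X,
      ((Kbar e.val.val.1 e = 1 ∧ Kbar e.val.val.2 e = -1) ∨
        (Kbar e.val.val.1 e = -1 ∧ Kbar e.val.val.2 e = 1)) ∧
      ∀ i : Fin n, i ≠ e.val.val.1 → i ≠ e.val.val.2 → Kbar i e = 0) :
    (∃ R : Matrix (Fin n) (Fin n) ℝ, R.IsSymm ∧ (∀ p ∈ X, R p.val.1 p.val.2 = 0) ∧
        (A + R).PosSemidef ∧ (A + R).rank ≤ r) ↔
    (∃ (u v : Xc n X → ℝ) (d : Fin n → ℝ),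
        (Bred n X A K Kbar + Matrix.diagonal (Sum.elim (Sum.elim u v) d)).PosSemidef ∧
        (Bred n X A K Kbar + Matrix.diagonal (Sum.elim (Sum.elim u v) d)).rank ≤
          2 * Fintype.card (Xc n X) + r) :=
  stmt14_general n A X r K Kbar hK hKbar

end
end

section
/- Let A ∈ ℝ^{n×n} be symmetric positive semidefinite such that A_{ij} < 0 for all i ≠ j. Then rank(A) ≥ n − 1. -/
/-!
If `A x = 0` then `xᵀ A x = 0`, and since the off-diagonal entries are nonpositive,
`|x|ᵀ A |x| ≤ xᵀ A x`; positive semidefiniteness then gives `A |x| = 0` as well. Reading row `i`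
of `A |x| = 0` when `x i = 0` forces every other `|x j|` to vanish, because `A i j < 0`. So a kernel
vector is determined by any one of its coordinates, the kernel has dimension at most one, and
rank–nullity gives the bound.
-/

namespace Matrix

variable {ι : Type*} [Fintype ι] {A : Matrix ι ι ℝ}

theorem abs_dotProduct_mulVec_abs_le (hoff : ∀ i j, i ≠ j → A i j ≤ 0) (x : ι → ℝ) :
    |x| ⬝ᵥ A *ᵥ |x| ≤ x ⬝ᵥ A *ᵥ x := by
  simp only [dotProduct, mulVec, Finset.mul_sum, Pi.abs_apply]
  refine Finset.sum_le_sum fun i _ => Finset.sum_le_sum fun j _ => ?_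
  rcases eq_or_ne i j with rfl | hij
  · rw [mul_left_comm, abs_mul_abs_self, mul_left_comm]
  · have := mul_le_mul_of_nonpos_left (le_abs_self (x i * x j)) (hoff i j hij)
    rw [abs_mul] at this
    linarith [mul_left_comm (x i) (A i j) (x j), mul_left_comm |x i| (A i j) |x j|]

namespace PosSemidef

theorem mulVec_abs_eq_zero (hA : A.PosSemidef) (hoff : ∀ i j, i ≠ j → A i j ≤ 0)
    {x : ι → ℝ} (hx : A *ᵥ x = 0) : A *ᵥ |x| = 0 := by
  have hle := abs_dotProduct_mulVec_abs_le hoff x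
  rw [hx, dotProduct_zero] at hle
  refine (hA.dotProduct_mulVec_zero_iff |x|).mp (le_antisymm hle ?_)
  exact hA.dotProduct_mulVec_nonneg |x|

theorem eq_zero_of_mulVec_eq_zero_of_apply_eq_zero (hA : A.PosSemidef)
    (hneg : ∀ i j, i ≠ j → A i j < 0) {x : ι → ℝ} (hx : A *ᵥ x = 0) {i : ι}
    (hxi : x i = 0) : x = 0 := by
  classical
  have hrow := congrFun (hA.mulVec_abs_eq_zero (fun i j h => (hneg i j h).le) hx) i
  simp only [mulVec, dotProduct, Pi.abs_apply, Pi.zero_apply,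
    ← Finset.add_sum_erase _ _ (Finset.mem_univ i), hxi, abs_zero, mul_zero, zero_add] at hrow
  have hterms := (Finset.sum_eq_zero_iff_of_nonpos fun j hj =>
    mul_nonpos_of_nonpos_of_nonneg (hneg i j (Finset.ne_of_mem_erase hj).symm).le
      (abs_nonneg (x j))).mp hrow
  funext j
  rcases eq_or_ne j i with rfl | hji
  · exact hxi
  · have := hterms j (Finset.mem_erase.mpr ⟨hji, Finset.mem_univ j⟩)
    simpa [(hneg i j hji.symm).ne] using this

theorem finrank_ker_mulVecLin_le_one (hA : A.PosSemidef) (hneg : ∀ i j, i ≠ j → A i j < 0) :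
    Module.finrank ℝ (LinearMap.ker A.mulVecLin) ≤ 1 := by
  rcases isEmpty_or_nonempty ι with _ | ⟨⟨i⟩⟩
  · simp [Module.finrank_zero_of_subsingleton]
  let eval : LinearMap.ker A.mulVecLin →ₗ[ℝ] ℝ := (LinearMap.proj i).comp (Submodule.subtype _)
  have heval : Function.Injective eval := by
    refine (injective_iff_map_eq_zero eval).mpr fun x hx => Subtype.ext ?_
    exact hA.eq_zero_of_mulVec_eq_zero_of_apply_eq_zero hneg x.2 hx
  simpa using LinearMap.finrank_le_finrank_of_injective heval

theorem card_sub_one_le_rank (hA : A.PosSemidef) (hneg : ∀ i j, i ≠ j → A i j < 0) :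
    Fintype.card ι - 1 ≤ A.rank := by
  have hrank_nullity := LinearMap.finrank_range_add_finrank_ker A.mulVecLin
  have hker := hA.finrank_ker_mulVecLin_le_one hneg
  rw [Module.finrank_fintype_fun_eq_card] at hrank_nullity
  rw [Matrix.rank]
  omega

end PosSemidef

end Matrix

/-- A positive semidefinite matrix with all off-diagonal entries
negative has rank at least `n − 1`. -/
theorem stmt16 (n : ℕ) (A : Matrix (Fin n) (Fin n) ℝ) (hA : A.PosSemidef)
    (hneg : ∀ i j, i ≠ j → A i j < 0) :
    n - 1 ≤ A.rank := by
  simpa using hA.card_sub_one_le_rank hneg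
end

section
/- Let A ∈ ℝ^{n×n} be symmetric positive semidefinite with A_{ij} < 0 for all i ≠ j, and suppose A is nonsingular (rank(A) = n). Then every entry of A⁻¹ is positive. -/
/-!
Let `x` be a column of `A⁻¹`, so `A x = eⱼ ≥ 0`, and split `x = x⁺ - x⁻`. Since the off-diagonal
entries of `A` are nonpositive and `x⁺`, `x⁻` have disjoint supports, `x⁻ᵀ A x⁺ ≤ 0`; hence
`x⁻ᵀ A x⁻ = x⁻ᵀ A x⁺ - x⁻ᵀ A x ≤ 0` as `x⁻ᵀ A x ≥ 0`. Positive semidefiniteness forces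
`A x⁻ = 0`, so `x⁻ = 0` by invertibility and `x ≥ 0`. If some `xᵢ` vanished, then `0 ≤ (A x)ᵢ = ∑_{k ≠ i} Aᵢₖ xₖ`
with every term `≤ 0` and `Aᵢₖ < 0` would force `x = 0`, contradicting `A x = eⱼ`.
-/

open Matrix

section ZMatrix

variable {ι R : Type*} [Fintype ι]

theorem dotProduct_mulVec_nonpos_of_offDiag_nonpos [CommRing R] [PartialOrder R]
    [IsOrderedRing R] {A : Matrix ι ι R} (hA : ∀ i j, i ≠ j → A i j ≤ 0) {u v : ι → R}
    (hu : 0 ≤ u) (hv : 0 ≤ v) (huv : ∀ i, u i * v i = 0) : u ⬝ᵥ A *ᵥ v ≤ 0 := by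
  simp only [dotProduct, mulVec, Finset.mul_sum]
  refine Finset.sum_nonpos fun i _ => Finset.sum_nonpos fun j _ => ?_
  obtain rfl | hij := eq_or_ne i j
  · rw [mul_left_comm, huv, mul_zero]
  · rw [← mul_assoc, mul_comm (u i)]
    exact mul_nonpos_of_nonpos_of_nonneg (mul_nonpos_of_nonpos_of_nonneg (hA i j hij) (hu i))
      (hv j)

theorem eq_zero_of_mulVec_nonneg_of_apply_eq_zero [CommRing R] [LinearOrder R]
    [IsStrictOrderedRing R] {A : Matrix ι ι R} (hA : ∀ i j, i ≠ j → A i j < 0) {x : ι → R}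
    (hx : 0 ≤ x) (hAx : 0 ≤ A *ᵥ x) {i : ι} (hxi : x i = 0) : x = 0 := by
  have hterm : ∀ k ∈ Finset.univ, A i k * x k ≤ 0 := fun k _ => by
    obtain rfl | hk := eq_or_ne k i
    · rw [hxi, mul_zero]
    · exact mul_nonpos_of_nonpos_of_nonneg (hA i k hk.symm).le (hx k)
  have hsum : ∑ k, A i k * x k = 0 :=
    le_antisymm (Finset.sum_nonpos hterm) (hAx i)
  funext k
  obtain rfl | hk := eq_or_ne k i
  · exact hxi
  · exact (mul_eq_zero.mp ((Finset.sum_eq_zero_iff_of_nonpos hterm).mp hsum k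
      (Finset.mem_univ k))).resolve_left (hA i k hk.symm).ne

end ZMatrix

section PosSemidef

variable {ι : Type*} [Fintype ι] {A : Matrix ι ι ℝ}

theorem Matrix.PosSemidef.mulVec_negPart_eq_zero (hA : A.PosSemidef) (hoff : ∀ i j, i ≠ j → A i j ≤ 0)
    {x : ι → ℝ} (hAx : 0 ≤ A *ᵥ x) : A *ᵥ x⁻ = 0 := by
  have hdisj : ∀ i, x⁻ i * x⁺ i = 0 := fun i => by
    rcases le_total (x i) 0 with h | h
    · simp [posPart_eq_zero.mpr h]
    · simp [negPart_eq_zero.mpr h]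
  have hcross : x⁻ ⬝ᵥ A *ᵥ x⁺ ≤ 0 :=
    dotProduct_mulVec_nonpos_of_offDiag_nonpos hoff (negPart_nonneg x) (posPart_nonneg x) hdisj
  have hsplit : x⁻ ⬝ᵥ A *ᵥ x = x⁻ ⬝ᵥ A *ᵥ x⁺ - x⁻ ⬝ᵥ A *ᵥ x⁻ := by
    rw [← dotProduct_sub, ← mulVec_sub, posPart_sub_negPart]
  have hnonneg : 0 ≤ x⁻ ⬝ᵥ A *ᵥ x := dotProduct_nonneg_of_nonneg (negPart_nonneg x) hAx
  have hquad : star x⁻ ⬝ᵥ A *ᵥ x⁻ = 0 := by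
    rw [star_trivial]
    exact le_antisymm (by linarith) (by simpa using hA.dotProduct_mulVec_nonneg x⁻)
  exact (hA.dotProduct_mulVec_zero_iff x⁻).mp hquad

theorem Matrix.PosSemidef.nonneg_of_mulVec_nonneg (hA : A.PosSemidef) (hoff : ∀ i j, i ≠ j → A i j ≤ 0)
    (hinj : Function.Injective A.mulVec) {x : ι → ℝ} (hAx : 0 ≤ A *ᵥ x) : 0 ≤ x :=
  negPart_eq_zero.mp <| hinj <| by rw [hA.mulVec_negPart_eq_zero hoff hAx, mulVec_zero]

end PosSemidef

/-- If `A ⪰ 0` has all off-diagonal entries negative and is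
nonsingular, then every entry of `A⁻¹` is positive. -/
theorem stmt18 (n : ℕ) (A : Matrix (Fin n) (Fin n) ℝ) (hA : A.PosSemidef)
    (hneg : ∀ i j, i ≠ j → A i j < 0) (hinv : IsUnit A.det) :
    ∀ i j, 0 < A⁻¹ i j := by
  intro i j
  set x := A⁻¹ *ᵥ Pi.single j 1 with hx
  have hAx : A *ᵥ x = Pi.single j 1 := by
    rw [hx, mulVec_mulVec, mul_nonsing_inv A hinv, one_mulVec]
  have hAx_nonneg : 0 ≤ A *ᵥ x := hAx ▸ Pi.single_nonneg.mpr zero_le_one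
  have hinj : Function.Injective A.mulVec :=
    mulVec_injective_iff_isUnit.mpr ((isUnit_iff_isUnit_det A).mpr hinv)
  have hx_nonneg : 0 ≤ x :=
    hA.nonneg_of_mulVec_nonneg (fun k l hkl => (hneg k l hkl).le) hinj hAx_nonneg
  have hxi : x i = A⁻¹ i j := by simp [hx]
  rw [← hxi]
  refine (hx_nonneg i).lt_of_ne fun h => ?_
  have hx0 : x = 0 := eq_zero_of_mulVec_nonneg_of_apply_eq_zero hneg hx_nonneg hAx_nonneg h.symm
  simpa [hx0] using congrFun hAx j
end

section
/- For every graph G and every positive integer c, there exists a graph G' such that: (a) if G is 3-colorable, then G' is 3-colorable; and (b) if G is not 3-colorable, then for every set S ⊆ V(G') with |S| ≤ c, the subgraph of G' induced on V(G') ∖ S is not 3-colorable. (Such a G' can be obtained by replacing every vertex of G with a complete 3-partite gadget on 3(c+1) vertices with parts of size c+1, and for each edge {i,j} of G joining all c+1 vertices of a designated 'exposed' part of the gadget of i to all c+1 vertices of the exposed part of the gadget of j.) -/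
/-- For every (finite) graph `G` and every positive integer `c`,
there is a finite graph `G'` such that: (a) if `G` is 3-colorable then so is `G'`;
and (b) if `G` is not 3-colorable, then for every set `S` of at most `c` vertices of
`G'`, the subgraph of `G'` induced on the complement of `S` is not 3-colorable. -/
theorem stmt19 (V : Type) [Fintype V] (G : SimpleGraph V) (c : ℕ) (hc : 0 < c) :
    ∃ (V' : Type) (_ : Fintype V') (G' : SimpleGraph V'),
      (G.Colorable 3 → G'.Colorable 3) ∧
      (¬ G.Colorable 3 → ∀ S : Finset V', S.card ≤ c →
        ¬ (G'.induce {v : V' | v ∉ S}).Colorable 3) := by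
  classical
  refine ⟨V × Fin (c+1), inferInstance, SimpleGraph.comap Prod.fst G, ?_, ?_⟩
  · rintro ⟨C⟩
    exact ⟨SimpleGraph.Coloring.mk (fun p => C p.1) (fun h => C.valid h)⟩
  · intro hG S hS hcol
    apply hG
    obtain ⟨C⟩ := hcol
    have hex : ∀ u : V, ∃ a : Fin (c+1), (u, a) ∉ S := by
      intro u
      by_contra h
      push_neg at h
      have hle : (Finset.univ.image (fun a : Fin (c+1) => (u, a))).card ≤ S.card := by
        apply Finset.card_le_card
        intro x hx
        simp only [Finset.mem_image, Finset.mem_univ, true_and] at hx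
        obtain ⟨a, rfl⟩ := hx
        exact h a
      rw [Finset.card_image_of_injective _ (fun a b hab => by simpa using hab)] at hle
      simp at hle
      omega
    choose rep hrep using hex
    exact ⟨SimpleGraph.Coloring.mk (fun u => C ⟨(u, rep u), hrep u⟩)
      (fun {u v} h => C.valid h)⟩
end
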